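/- arXiv:2310.13045 — 3 statements merged into one kernel-verified Lean document; each statement's English description precedes it below -/
import Mathlib

section
/- If a unit vector ψ in a finite-dimensional complex inner product space has d = dim H rotated copies e^{-iθ_k J} ψ (for a self-adjoint operator J with integer-spaced spectrum and some real angles θ_1,...,θ_d) that are pairwise orthogonal, then |⟨e_m, ψ⟩|² = 1/d for every eigenvector e_m of J in an orthonormal eigenbasis; i.e., ψ must be an equal-magnitude superposition of all eigenvectors of J. -/
open Complex Real BigOperators

/-!
The `d` rotated copies of `ψ` are orthonormal in a `d`-dimensional space, so they form an
orthonormal basis. Parseval's identity for the eigenvector `e_m` gives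
`1 = ∑ₖ |⟨e^{-iθ_k J} ψ, e_m⟩|² = d |⟨ψ, e_m⟩|²`, because a rotation only changes the phase of
the coefficient of `e_m`.
-/

open Module

theorem Orthonormal.sum_sq_norm_inner_right_of_card_eq_finrank {𝕜 E ι : Type*} [RCLike 𝕜]
    [NormedAddCommGroup E] [InnerProductSpace 𝕜 E] [FiniteDimensional 𝕜 E] [Fintype ι]
    {v : ι → E} (hv : Orthonormal 𝕜 v) (hcard : Fintype.card ι = finrank 𝕜 E) (x : E) :
    ∑ i, ‖inner 𝕜 (v i) x‖ ^ 2 = ‖x‖ ^ 2 := by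
  have hspan := (hv.linearIndependent.span_eq_top_of_card_eq_finrank' hcard).ge
  simpa using (OrthonormalBasis.mk hv hspan).sum_sq_norm_inner_right x

theorem Complex.norm_exp_neg_I_mul_ofReal_mul_intCast (θ : ℝ) (n : ℤ) :
    ‖exp (-I * θ * n)‖ = 1 := by
  rw [show -I * θ * n = (-(θ * n) : ℝ) * I by push_cast; ring]
  exact norm_exp_ofReal_mul_I _

theorem optimal_protractor_is_uniform_general (d : ℕ)
    (μ : Fin d → ℤ)
    (ψ : Fin d → ℂ) (hψ : ∑ m, ‖ψ m‖ ^ 2 = 1)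
    (θ : Fin d → ℝ)
    (horth : ∀ k l : Fin d, k ≠ l →
      ∑ m, star (Complex.exp (-Complex.I * (θ k) * (μ m)) * ψ m) *
        (Complex.exp (-Complex.I * (θ l) * (μ m)) * ψ m) = 0) :
    ∀ m, ‖ψ m‖ ^ 2 = 1 / d := by
  set v : Fin d → EuclideanSpace ℂ (Fin d) :=
    fun k => WithLp.toLp 2 fun m => exp (-I * θ k * μ m) * ψ m
  have hnorm_apply (k m : Fin d) : ‖v k m‖ = ‖ψ m‖ := by
    rw [PiLp.toLp_apply, norm_mul, norm_exp_neg_I_mul_ofReal_mul_intCast, one_mul]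
  have hv : Orthonormal ℂ v := by
    refine ⟨fun k => ?_, fun k l hkl => ?_⟩
    · rw [← pow_eq_one_iff_of_nonneg (norm_nonneg _) two_ne_zero, EuclideanSpace.norm_sq_eq]
      simpa only [hnorm_apply] using hψ
    · simpa [v, PiLp.inner_apply, mul_comm] using horth k l hkl
  intro m
  have hparseval := hv.sum_sq_norm_inner_right_of_card_eq_finrank (by simp)
    (EuclideanSpace.single m 1)
  simp only [EuclideanSpace.inner_single_right, one_mul, RCLike.norm_conj, hnorm_apply,
    Finset.sum_const, Finset.card_univ, Fintype.card_fin, nsmul_eq_mul, PiLp.norm_single, norm_one,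
    one_pow] at hparseval
  exact eq_one_div_of_mul_eq_one_right hparseval

/-- If a unit vector `ψ` (expressed in an orthonormal eigenbasis of a self-adjoint operator `J`
with integer eigenvalues `μ m`) has `d` rotated copies `e^{-iθ_k J} ψ` that are pairwise
orthogonal, then `|⟨e_m, ψ⟩|² = 1/d` for every `m`: `ψ` is an equal-magnitude superposition
of all eigenvectors of `J`. -/
theorem optimal_protractor_is_uniform (d : ℕ) (hd : 0 < d)
    (μ : Fin d → ℤ) (hμ : Function.Injective μ)
    (ψ : Fin d → ℂ) (hψ : ∑ m, ‖ψ m‖ ^ 2 = 1)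
    (θ : Fin d → ℝ)
    (horth : ∀ k l : Fin d, k ≠ l →
      ∑ m, star (Complex.exp (-Complex.I * (θ k) * (μ m)) * ψ m) *
        (Complex.exp (-Complex.I * (θ l) * (μ m)) * ψ m) = 0) :
    ∀ m, ‖ψ m‖ ^ 2 = 1 / d :=
  optimal_protractor_is_uniform_general d μ ψ hψ θ horth
end

section
/- There is no unit vector ψ ∈ ℂ² that is simultaneously unbiased with respect to the eigenbases of all three Pauli matrices σ_x, σ_y, σ_z; i.e., there is no ψ with |⟨v, ψ⟩|² = 1/2 for every eigenvector v of each of σ_x, σ_y, σ_z. -/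
open Complex Real BigOperators Matrix

noncomputable section

def pauliX : Matrix (Fin 2) (Fin 2) ℂ := !![0, 1; 1, 0]
def pauliY : Matrix (Fin 2) (Fin 2) ℂ := !![0, -Complex.I; Complex.I, 0]
def pauliZ : Matrix (Fin 2) (Fin 2) ℂ := !![1, 0; 0, -1]

/-!
Testing `ψ` against the `σ_z`-eigenvector `(1, 0)` gives `|ψ₀|² = |ψ₁|² = 1/2`. Testing it against
the `σ_x`- and `σ_y`-eigenvectors `(1, 1)/√2` and `(1, i)/√2` then forces the real and the
imaginary part of `ψ₀ · conj ψ₁` to vanish, so `ψ₀ ψ₁ = 0`, which contradicts `|ψ₀|² |ψ₁|² = 1/4`.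
-/

theorem pauliX_mulVec_one_one : pauliX *ᵥ ![1, 1] = (1 : ℂ) • ![1, 1] := by
  ext i; fin_cases i <;> simp [pauliX, mulVec, dotProduct]

theorem pauliY_mulVec_one_I : pauliY *ᵥ ![1, I] = (1 : ℂ) • ![1, I] := by
  ext i; fin_cases i <;> simp [pauliY, mulVec, dotProduct]

theorem pauliZ_mulVec_one_zero : pauliZ *ᵥ ![1, 0] = (1 : ℂ) • ![1, 0] := by
  ext i; fin_cases i <;> simp [pauliZ, mulVec, dotProduct]

theorem norm_sq_sum_star_mul_eq_of_unbiased {ι : Type*} [Fintype ι] {A : Matrix ι ι ℂ}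
    {ψ w : ι → ℂ} {t : ℂ} {r : ℝ}
    (hA : ∀ (t : ℂ) (v : ι → ℂ), A *ᵥ v = t • v → ∑ i, ‖v i‖ ^ 2 = 1 →
      ‖∑ i, star (v i) * ψ i‖ ^ 2 = 1 / 2)
    (hw : A *ᵥ w = t • w) (hr : 0 < r) (hnorm : ∑ i, ‖w i‖ ^ 2 = r) :
    ‖∑ i, star (w i) * ψ i‖ ^ 2 = r / 2 := by
  set c : ℂ := (((√r)⁻¹ : ℝ) : ℂ)
  have hc : ‖c‖ ^ 2 = r⁻¹ := by
    rw [norm_real, norm_inv, Real.norm_of_nonneg (sqrt_nonneg r), inv_pow, sq_sqrt hr.le]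
  have h := hA t (c • w) (by rw [mulVec_smul, hw, smul_comm])
    (by simp_rw [Pi.smul_apply, smul_eq_mul, norm_mul, mul_pow, ← Finset.mul_sum, hc, hnorm,
      inv_mul_cancel₀ hr.ne'])
  simp_rw [Pi.smul_apply, smul_eq_mul, star_mul', mul_assoc, ← Finset.mul_sum, norm_mul,
    norm_star, mul_pow, hc] at h
  field_simp at h ⊢
  linarith

theorem eq_zero_or_eq_zero_of_norm_sq_add_of_norm_sq_sub_I_mul {a b : ℂ}
    (hadd : ‖a + b‖ ^ 2 = ‖a‖ ^ 2 + ‖b‖ ^ 2) (hsub : ‖a - I * b‖ ^ 2 = ‖a‖ ^ 2 + ‖b‖ ^ 2) :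
    a = 0 ∨ b = 0 := by
  simp only [Complex.sq_norm, normSq_add, normSq_sub, map_mul, conj_I] at hadd hsub
  have hprod : a * starRingEnd ℂ b = 0 := by
    apply Complex.ext
    · simpa using hadd
    · simp at hsub ⊢
      linarith
  simpa using hprod

/-- There is no unit vector `ψ ∈ ℂ²` that is simultaneously unbiased with respect to the
eigenbases of all three Pauli matrices, i.e. with `|⟨v, ψ⟩|² = 1/2` for every unit
eigenvector `v` of each of `σ_x, σ_y, σ_z`. -/
theorem no_perfect_protractor_spin_half :
    ¬ ∃ ψ : Fin 2 → ℂ, (∑ i, ‖ψ i‖ ^ 2 = 1) ∧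
      ∀ A ∈ ({pauliX, pauliY, pauliZ} : Set (Matrix (Fin 2) (Fin 2) ℂ)),
        ∀ (t : ℂ) (v : Fin 2 → ℂ), A.mulVec v = t • v → (∑ i, ‖v i‖ ^ 2 = 1) →
          ‖∑ i, star (v i) * ψ i‖ ^ 2 = 1 / 2 := by
  rintro ⟨ψ, hψ, hunbiased⟩
  have hz : ‖ψ 0‖ ^ 2 = 1 / 2 := by
    simpa using norm_sq_sum_star_mul_eq_of_unbiased (hunbiased pauliZ (by simp))
      pauliZ_mulVec_one_zero one_pos (by simp)
  have hx : ‖ψ 0 + ψ 1‖ ^ 2 = 1 := by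
    simpa using norm_sq_sum_star_mul_eq_of_unbiased (hunbiased pauliX (by simp))
      pauliX_mulVec_one_one two_pos (by norm_num)
  have hy : ‖ψ 0 - I * ψ 1‖ ^ 2 = 1 := by
    simpa [sub_eq_add_neg] using norm_sq_sum_star_mul_eq_of_unbiased
      (hunbiased pauliY (by simp)) pauliY_mulVec_one_I two_pos (by norm_num)
  have h1 : ‖ψ 1‖ ^ 2 = 1 / 2 := by
    rw [Fin.sum_univ_two] at hψ
    linarith
  rcases eq_zero_or_eq_zero_of_norm_sq_add_of_norm_sq_sub_I_mul (by linarith) (by linarith)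
    with h | h
  · simp [h] at hz
  · simp [h] at h1

end
end

section
/- The spin-1 state ψ = (1/√3)(e^{3πi/4}|1⟩ + |0⟩ + e^{iπ/4}|−1⟩) (written in the J_z eigenbasis) satisfies |⟨v, ψ⟩|² = 1/3 for every eigenvector v of each of the spin-1 angular momentum operators J_x, J_y, J_z; i.e., ψ is a perfect quantum protractor for spin 1. -/
/-!
Each of `J_x, J_y, J_z` has the three distinct eigenvalues `1, 0, -1` on a three-dimensional
space, so every eigenvector is a multiple of one of three fixed eigenvectors. The condition
`|⟨v, ψ⟩|² = ‖v‖² / 3` is invariant under scaling `v`, so it only has to be checked on these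
nine eigenvectors, which is a direct computation once `e^{iπ/4} = (1 + i)/√2` and
`e^{3iπ/4} = (-1 + i)/√2` are substituted.
-/

open Complex Real BigOperators Matrix

noncomputable section

def J1x : Matrix (Fin 3) (Fin 3) ℂ :=
  (1 / (Real.sqrt 2 : ℂ)) • !![0, 1, 0; 1, 0, 1; 0, 1, 0]
def J1y : Matrix (Fin 3) (Fin 3) ℂ :=
  (Complex.I / (Real.sqrt 2 : ℂ)) • !![0, -1, 0; 1, 0, -1; 0, 1, 0]
def J1z : Matrix (Fin 3) (Fin 3) ℂ := !![1, 0, 0; 0, 0, 0; 0, 0, -1]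

theorem Module.End.HasEigenvector.exists_eq_smul_of_card_eq_finrank {K V ι : Type*} [Field K]
    [AddCommGroup V] [Module K V] [FiniteDimensional K V] [Fintype ι] {f : Module.End K V}
    {μ : ι → K} (hμ : Function.Injective μ) {e : ι → V} (he : ∀ i, f.HasEigenvector (μ i) (e i))
    (hcard : Fintype.card ι = Module.finrank K V) {t : K} {v : V} (hv : f.HasEigenvector t v) :
    ∃ i, ∃ a : K, v = a • e i := by
  have hli := f.eigenvectors_linearIndependent' μ hμ e he
  obtain ⟨c, hv_sum⟩ := (Submodule.mem_span_range_iff_exists_fun K).mp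
    ((hli.span_eq_top_of_card_eq_finrank' hcard).ge (Submodule.mem_top (x := v)))
  have hc : ∀ i, (μ i - t) * c i = 0 := by
    refine Fintype.linearIndependent_iff.mp hli _ ?_
    calc ∑ i, ((μ i - t) * c i) • e i = f v - t • v := by
          simp [← hv_sum, map_sum, Finset.smul_sum, (he _).apply_eq_smul, sub_mul, sub_smul,
            mul_smul, smul_comm (μ _)]
      _ = 0 := by rw [hv.apply_eq_smul, sub_self]
  obtain ⟨j, hj⟩ : ∃ j, c j ≠ 0 := by
    by_contra! h
    exact hv.2 (by simp [← hv_sum, h])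
  have hμj : μ j = t := by simpa [sub_eq_zero, hj] using hc j
  refine ⟨j, c j, hv_sum.symm.trans (Finset.sum_eq_single j (fun i _ hij => ?_) (by simp))⟩
  have : μ i - t ≠ 0 := sub_ne_zero.mpr (hμj ▸ hμ.ne hij)
  simp [(mul_eq_zero.mp (hc i)).resolve_left this]

/-- The scale-invariant form of `|⟨v, ψ⟩|² = 1 / n` for unit vectors `v`. -/
def IsUnbiased {n : Type*} [Fintype n] (ψ v : n → ℂ) : Prop :=
  ‖star v ⬝ᵥ ψ‖ ^ 2 = (∑ i, ‖v i‖ ^ 2) / Fintype.card n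

theorem IsUnbiased.smul {n : Type*} [Fintype n] {ψ v : n → ℂ} (h : IsUnbiased ψ v) (a : ℂ) :
    IsUnbiased ψ (a • v) := by
  unfold IsUnbiased at *
  simp only [star_smul, smul_dotProduct, Pi.smul_apply, smul_eq_mul, norm_mul, mul_pow,
    norm_star, ← Finset.mul_sum, h, mul_div_assoc]

theorem IsUnbiased.of_mulVec_eq_smul {n ι : Type*} [Fintype n] [DecidableEq n] [Fintype ι]
    {ψ : n → ℂ} {A : Matrix n n ℂ} {μ : ι → ℂ} (hμ : Function.Injective μ) {e : ι → n → ℂ}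
    (he : ∀ i, A *ᵥ e i = μ i • e i) (he0 : ∀ i, e i ≠ 0)
    (hcard : Fintype.card ι = Fintype.card n) (hψ : ∀ i, IsUnbiased ψ (e i))
    {t : ℂ} {v : n → ℂ} (hv : A *ᵥ v = t • v) : IsUnbiased ψ v := by
  by_cases hv0 : v = 0
  · simp [IsUnbiased, hv0]
  have hv' : Module.End.HasEigenvector (toLin' A) t v :=
    Module.End.hasEigenvector_iff.mpr ⟨by simpa using hv, hv0⟩
  obtain ⟨i, a, rfl⟩ := hv'.exists_eq_smul_of_card_eq_finrank hμ
    (fun i => Module.End.hasEigenvector_iff.mpr ⟨by simpa using he i, he0 i⟩)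
    (by simpa using hcard)
  exact (hψ i).smul a

def spinOneEigenvalues : Fin 3 → ℂ := ![1, 0, -1]

theorem spinOneEigenvalues_injective : Function.Injective spinOneEigenvalues := by
  intro i j
  fin_cases i <;> fin_cases j <;> norm_num [spinOneEigenvalues]

def J1xEigenvectors : Fin 3 → Fin 3 → ℂ := ![![1, √2, 1], ![1, 0, -1], ![1, -√2, 1]]

def J1yEigenvectors : Fin 3 → Fin 3 → ℂ :=
  ![![1, I * √2, -1], ![1, 0, 1], ![1, -(I * √2), -1]]

theorem ofReal_sqrt_two_sq : ((√2 : ℝ) : ℂ) ^ 2 = 2 := by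
  rw [← ofReal_pow, Real.sq_sqrt zero_le_two, ofReal_ofNat]

theorem J1x_mulVec_eigenvectors (i : Fin 3) :
    J1x *ᵥ J1xEigenvectors i = spinOneEigenvalues i • J1xEigenvectors i := by
  ext j
  fin_cases i <;> fin_cases j <;> simp [J1x, J1xEigenvectors, spinOneEigenvalues, mulVec,
    dotProduct, Fin.sum_univ_three] <;> field_simp <;> simp [ofReal_sqrt_two_sq] <;> norm_num

theorem J1y_mulVec_eigenvectors (i : Fin 3) :
    J1y *ᵥ J1yEigenvectors i = spinOneEigenvalues i • J1yEigenvectors i := by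
  ext j
  fin_cases i <;> fin_cases j <;> simp [J1y, J1yEigenvectors, spinOneEigenvalues, mulVec,
    dotProduct, Fin.sum_univ_three] <;> field_simp <;> simp [ofReal_sqrt_two_sq] <;> norm_num

theorem J1z_mulVec_single (i : Fin 3) :
    J1z *ᵥ Pi.single i 1 = spinOneEigenvalues i • Pi.single i 1 := by
  ext j
  fin_cases i <;> fin_cases j <;> simp [J1z, spinOneEigenvalues, mulVec, dotProduct,
    Fin.sum_univ_three]

def protractorState : Fin 3 → ℂ := fun i => (1 / (Real.sqrt 3 : ℂ)) *
  ![Complex.exp (Complex.I * (3 * Real.pi / 4)), 1, Complex.exp (Complex.I * (Real.pi / 4))] i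

theorem exp_I_mul_pi_div_four : exp (I * (π / 4)) = (1 + I) / √2 := by
  have : I * (π / 4) = ((π / 4 : ℝ) : ℂ) * I := by push_cast; ring
  rw [this, exp_mul_I, ← ofReal_cos, ← ofReal_sin, Real.cos_pi_div_four, Real.sin_pi_div_four,
    eq_div_iff (by simp)]
  push_cast
  linear_combination (1 + I) / 2 * ofReal_sqrt_two_sq

theorem exp_I_mul_three_pi_div_four : exp (I * (3 * π / 4)) = (-1 + I) / √2 := by
  have : I * (3 * π / 4) = ((π / 2 : ℝ) : ℂ) * I + I * (π / 4) := by push_cast; ring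
  rw [this, Complex.exp_add, exp_I_mul_pi_div_four, exp_mul_I, ← ofReal_cos, ← ofReal_sin,
    Real.cos_pi_div_two, Real.sin_pi_div_two]
  push_cast
  linear_combination I_sq / √2

theorem isUnbiased_protractorState_J1xEigenvectors (i : Fin 3) :
    IsUnbiased protractorState (J1xEigenvectors i) := by
  rw [IsUnbiased, Complex.sq_norm]
  fin_cases i <;> simp [protractorState, exp_I_mul_pi_div_four, exp_I_mul_three_pi_div_four,
    J1xEigenvectors, dotProduct, Fin.sum_univ_three, Complex.normSq_apply] <;> ring_nf <;> norm_num

theorem isUnbiased_protractorState_J1yEigenvectors (i : Fin 3) :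
    IsUnbiased protractorState (J1yEigenvectors i) := by
  rw [IsUnbiased, Complex.sq_norm]
  fin_cases i <;> simp [protractorState, exp_I_mul_pi_div_four, exp_I_mul_three_pi_div_four,
    J1yEigenvectors, dotProduct, Fin.sum_univ_three, Complex.normSq_apply] <;> ring_nf <;> norm_num

theorem isUnbiased_protractorState_single (i : Fin 3) :
    IsUnbiased protractorState (Pi.single i 1) := by
  rw [IsUnbiased, Complex.sq_norm]
  fin_cases i <;> simp [protractorState, exp_I_mul_pi_div_four, exp_I_mul_three_pi_div_four,
    dotProduct, Fin.sum_univ_three, Complex.normSq_apply] <;> ring_nf <;> norm_num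

/-- The spin-1 state `ψ = (1/√3)(e^{3πi/4}|1⟩ + |0⟩ + e^{iπ/4}|−1⟩)` satisfies
`|⟨v, ψ⟩|² = 1/3` for every unit eigenvector `v` of each of `J_x, J_y, J_z`:
it is a perfect quantum protractor for spin 1. -/
theorem perfect_protractor_spin_one :
    ∀ A ∈ ({J1x, J1y, J1z} : Set (Matrix (Fin 3) (Fin 3) ℂ)),
      ∀ (t : ℂ) (v : Fin 3 → ℂ), A.mulVec v = t • v → (∑ i, ‖v i‖ ^ 2 = 1) →
        ‖∑ i, star (v i) *
          ((1 / (Real.sqrt 3 : ℂ)) *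
            ![Complex.exp (Complex.I * (3 * Real.pi / 4)), 1,
              Complex.exp (Complex.I * (Real.pi / 4))] i)‖ ^ 2 = 1 / 3 := by
  intro A hA t v hv hnorm
  have hunbiased : IsUnbiased protractorState v := by
    rcases hA with rfl | rfl | rfl
    · exact .of_mulVec_eq_smul spinOneEigenvalues_injective J1x_mulVec_eigenvectors
        (fun i => by fin_cases i <;> simp [J1xEigenvectors]) rfl
        isUnbiased_protractorState_J1xEigenvectors hv
    · exact .of_mulVec_eq_smul spinOneEigenvalues_injective J1y_mulVec_eigenvectors
        (fun i => by fin_cases i <;> simp [J1yEigenvectors]) rfl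
        isUnbiased_protractorState_J1yEigenvectors hv
    · exact .of_mulVec_eq_smul spinOneEigenvalues_injective J1z_mulVec_single
        (fun i => by simp) rfl isUnbiased_protractorState_single hv
  exact hunbiased.trans (by simp [hnorm])

end
end
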